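/- arXiv:2410.00694 — 2 statements merged into one kernel-verified Lean document; each statement's English description precedes it below -/
import Mathlib

section
/- Singularity criterion: let s ≥ 2, let ψ = Σ_{k=1}^∞ ψ_k / s^k where (ψ_k) are independent, ψ_k takes nonnegative integer values d_{0k} < ... < d_{(s-1)k} ≤ L with probabilities p_{0k},...,p_{(s-1)k}. If Π_{n=1}^∞ max_j p_{jn} = 0 and Π_{n=1}^∞ Σ_{j=0}^{s-1} √(p_{jn}/s) = 0, then the law of ψ is not absolutely continuous with respect to Lebesgue measure. -/
/-!
If the law `μ` of `ψ` had a density `f`, then `∫ √f` would be positive. Fixing the first `n`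
digits splits `μ` into `s ^ n` pieces; the piece for the digit string `c` has mass
`∏ₖ p (c k) k` and lives on an interval of length `L / s ^ n`, so by Cauchy–Schwarz its own
density contributes at most `√(L * ∏ₖ p (c k) k / s)` to `∫ √f`. Since `√` is subadditive,
`∫ √f ≤ √L * ∏_{k < n} ∑ⱼ √(p j k / s)`, which tends to `0`.
-/

open MeasureTheory ProbabilityTheory
open Set Filter Function ENNReal

section Hellinger

variable {α : Type*} [MeasurableSpace α]

noncomputable def hellingerAffinity (μ ν : Measure α) : ℝ≥0∞ :=
  ∫⁻ x, μ.rnDeriv ν x ^ (1 / 2 : ℝ) ∂ν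

lemma hellingerAffinity_zero_left (ν : Measure α) : hellingerAffinity 0 ν = 0 := by
  rw [hellingerAffinity, lintegral_congr_ae ((Measure.rnDeriv_zero ν).mono fun x hx => by
    rw [hx, Pi.zero_apply, zero_rpow_of_pos (by norm_num)])]
  simp

variable {μ ν : Measure α}

lemma setLIntegral_rnDeriv_rpow_half_le (S : Set α) :
    ∫⁻ x in S, μ.rnDeriv ν x ^ (1 / 2 : ℝ) ∂ν ≤ μ S ^ (1 / 2 : ℝ) * ν S ^ (1 / 2 : ℝ) := by
  have h := ENNReal.lintegral_mul_le_Lp_mul_Lq (ν.restrict S) Real.HolderConjugate.two_two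
    ((Measure.measurable_rnDeriv μ ν).pow_const (1 / 2 : ℝ)).aemeasurable aemeasurable_const
    (g := fun _ => 1)
  simp only [Pi.mul_apply, mul_one, ← rpow_mul, one_rpow, setLIntegral_const, one_mul] at h
  norm_num at h
  exact h.trans (by gcongr; exact Measure.setLIntegral_rnDeriv_le S)

lemma hellingerAffinity_le_of_measure_compl_eq_zero {S : Set α} (hS : MeasurableSet S)
    (hμS : μ Sᶜ = 0) : hellingerAffinity μ ν ≤ (μ univ * ν S) ^ (1 / 2 : ℝ) := by
  rw [hellingerAffinity, ← lintegral_add_compl _ hS]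
  calc _ ≤ μ S ^ (1 / 2 : ℝ) * ν S ^ (1 / 2 : ℝ) + μ Sᶜ ^ (1 / 2 : ℝ) * ν Sᶜ ^ (1 / 2 : ℝ) :=
        add_le_add (setLIntegral_rnDeriv_rpow_half_le S) (setLIntegral_rnDeriv_rpow_half_le Sᶜ)
    _ ≤ (μ univ * ν S) ^ (1 / 2 : ℝ) := by
      rw [hμS, zero_rpow_of_pos (by norm_num), zero_mul, add_zero,
        ← mul_rpow_of_nonneg _ _ (by norm_num)]
      gcongr
      exact subset_univ S

variable [SigmaFinite ν]

lemma hellingerAffinity_add_le (μ₁ μ₂ : Measure α) [IsFiniteMeasure μ₁] [IsFiniteMeasure μ₂] :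
    hellingerAffinity (μ₁ + μ₂) ν ≤ hellingerAffinity μ₁ ν + hellingerAffinity μ₂ ν :=
  calc hellingerAffinity (μ₁ + μ₂) ν
      = ∫⁻ x, (μ₁.rnDeriv ν x + μ₂.rnDeriv ν x) ^ (1 / 2 : ℝ) ∂ν :=
        lintegral_congr_ae <| (Measure.rnDeriv_add μ₁ μ₂ ν).mono fun x hx => by
          simp only [hx, Pi.add_apply]
    _ ≤ ∫⁻ x, (μ₁.rnDeriv ν x ^ (1 / 2 : ℝ) + μ₂.rnDeriv ν x ^ (1 / 2 : ℝ)) ∂ν :=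
        lintegral_mono fun x => rpow_add_le_add_rpow _ _ (by norm_num) (by norm_num)
    _ = _ := lintegral_add_left ((Measure.measurable_rnDeriv μ₁ ν).pow_const _) _

lemma hellingerAffinity_sum_le {ι : Type*} (t : Finset ι) (μ : ι → Measure α)
    [∀ i, IsFiniteMeasure (μ i)] :
    hellingerAffinity (∑ i ∈ t, μ i) ν ≤ ∑ i ∈ t, hellingerAffinity (μ i) ν := by
  classical
  induction t using Finset.induction_on with
  | empty => simp [hellingerAffinity_zero_left]
  | insert i t hi ih =>
    rw [Finset.sum_insert hi, Finset.sum_insert hi]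
    exact (hellingerAffinity_add_le _ _).trans (add_le_add_right ih _)

lemma hellingerAffinity_map_le {Ω ι : Type*} [MeasurableSpace Ω] [Fintype ι] {P : Measure Ω}
    [IsFiniteMeasure P] {X : Ω → α} (hX : Measurable X) {A : ι → Set Ω}
    (hA : ∀ i, MeasurableSet (A i)) (hdisj : Pairwise (Disjoint on A)) (hcover : ⋃ i, A i = univ)
    {S : ι → Set α} (hS : ∀ i, MeasurableSet (S i)) (hXS : ∀ i, MapsTo X (A i) (S i)) :
    hellingerAffinity (P.map X) ν ≤ ∑ i, (P (A i) * ν (S i)) ^ (1 / 2 : ℝ) := by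
  have hsum : P.map X = ∑ i, (P.restrict (A i)).map X :=
    calc P.map X = (P.restrict (⋃ i, A i)).map X := by rw [hcover, Measure.restrict_univ]
      _ = _ := by
        rw [Measure.restrict_iUnion hdisj hA, Measure.map_sum hX.aemeasurable,
          Measure.sum_fintype]
  rw [hsum]
  refine (hellingerAffinity_sum_le _ _).trans (Finset.sum_le_sum fun i _ => ?_)
  have hcompl : (P.restrict (A i)).map X (S i)ᶜ = 0 := by
    rw [Measure.map_apply hX (hS i).compl, Measure.restrict_apply (hX (hS i).compl),
      preimage_compl, ← sdiff_eq_compl_inter,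
      sdiff_eq_empty.2 (show A i ⊆ X ⁻¹' S i from hXS i), measure_empty]
  refine (hellingerAffinity_le_of_measure_compl_eq_zero (hS i) hcompl).trans_eq ?_
  rw [Measure.map_apply hX MeasurableSet.univ, preimage_univ, Measure.restrict_apply_univ]

lemma eq_zero_of_hellingerAffinity_eq_zero [SigmaFinite μ] (hμν : μ ≪ ν)
    (h : hellingerAffinity μ ν = 0) : μ = 0 := by
  have hf : μ.rnDeriv ν =ᵐ[ν] 0 := by
    filter_upwards [(lintegral_eq_zero_iff ((Measure.measurable_rnDeriv μ ν).pow_const _)).1 h]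
      with x hx
    exact ((rpow_eq_zero_iff.1 hx).resolve_right fun h => by norm_num at h).1
  rw [← Measure.withDensity_rnDeriv_eq μ ν hμν, withDensity_congr_ae hf, withDensity_zero]

end Hellinger

section DigitExpansion

variable {b L : ℝ} {x : ℕ → ℝ}

lemma div_pow_succ_le (hb : 2 ≤ b) {y : ℝ} (hy0 : 0 ≤ y) (hyL : y ≤ L) (k : ℕ) :
    y / b ^ (k + 1) ≤ L / 2 / 2 ^ k :=
  calc y / b ^ (k + 1) ≤ y / 2 ^ (k + 1) := by gcongr
    _ ≤ L / 2 ^ (k + 1) := by gcongr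
    _ = L / 2 / 2 ^ k := by rw [pow_succ', div_div]

lemma summable_div_pow_succ (hb : 2 ≤ b) (hx0 : ∀ k, 0 ≤ x k) (hxL : ∀ k, x k ≤ L) :
    Summable fun k => x k / b ^ (k + 1) :=
  (summable_geometric_two' L).of_nonneg_of_le (fun k => div_nonneg (hx0 k) (by positivity))
    fun k => div_pow_succ_le hb (hx0 k) (hxL k) k

lemma tsum_div_pow_succ_le (hb : 2 ≤ b) (hx0 : ∀ k, 0 ≤ x k) (hxL : ∀ k, x k ≤ L) :
    ∑' k, x k / b ^ (k + 1) ≤ L :=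
  ((summable_div_pow_succ hb hx0 hxL).tsum_le_tsum (fun k => div_pow_succ_le hb (hx0 k) (hxL k) k)
    (summable_geometric_two' L)).trans_eq (tsum_geometric_two' L)

lemma tsum_div_pow_succ_mem_Icc (hb : 2 ≤ b) (hx0 : ∀ k, 0 ≤ x k) (hxL : ∀ k, x k ≤ L)
    (n : ℕ) :
    ∑' k, x k / b ^ (k + 1) ∈ Icc (∑ k ∈ Finset.range n, x k / b ^ (k + 1))
      (∑ k ∈ Finset.range n, x k / b ^ (k + 1) + L / b ^ n) := by
  have htail : ∑' k, x (k + n) / b ^ (k + n + 1) = (∑' k, x (k + n) / b ^ (k + 1)) / b ^ n := by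
    rw [← tsum_div_const]
    congr 1 with k
    rw [div_div, ← pow_add, add_right_comm]
  rw [← (summable_div_pow_succ hb hx0 hxL).sum_add_tsum_nat_add n, htail]
  have hbn : 0 < b ^ n := by positivity
  constructor
  · exact le_add_of_nonneg_right
      (div_nonneg (tsum_nonneg fun k => div_nonneg (hx0 _) (by positivity)) hbn.le)
  · exact add_le_add_right (div_le_div_of_nonneg_right
      (tsum_div_pow_succ_le hb (fun k => hx0 _) fun k => hxL _) hbn.le) _

end DigitExpansion

section Cylinder

variable {Ω β ι : Type*} (X : ℕ → Ω → β) (v : ι → ℕ → β) {n : ℕ}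

def cylinder (c : Fin n → ι) : Set Ω :=
  ⋂ k : Fin n, X k ⁻¹' {v (c k) k}

variable {X v}

lemma apply_eq_of_mem_cylinder {c : Fin n → ι} {ω : Ω} (hω : ω ∈ cylinder X v c) (k : Fin n) :
    X k ω = v (c k) k :=
  mem_iInter.1 hω k

lemma pairwise_disjoint_cylinder (hv : ∀ k, Injective fun j => v j k) :
    Pairwise (Disjoint on fun c : Fin n → ι => cylinder X v c) := by
  intro c c' hne
  obtain ⟨k, hk⟩ := ne_iff.1 hne
  refine Set.disjoint_left.2 fun ω hω hω' => hk (hv k ?_)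
  simp only [← apply_eq_of_mem_cylinder hω, ← apply_eq_of_mem_cylinder hω']

lemma iUnion_cylinder (hXv : ∀ k ω, ∃ j, X k ω = v j k) :
    ⋃ c : Fin n → ι, cylinder X v c = univ :=
  eq_univ_of_forall fun ω =>
    mem_iUnion.2 ⟨fun k => (hXv k ω).choose, mem_iInter.2 fun k => (hXv k ω).choose_spec⟩

variable [MeasurableSpace Ω] [MeasurableSpace β] [MeasurableSingletonClass β]

lemma measurableSet_cylinder (hX : ∀ k, Measurable (X k)) (c : Fin n → ι) :
    MeasurableSet (cylinder X v c) :=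
  MeasurableSet.iInter fun k => hX k (measurableSet_singleton _)

lemma measure_cylinder {P : Measure Ω} (hindep : iIndepFun X P) (c : Fin n → ι) :
    P (cylinder X v c) = ∏ k : Fin n, P {ω | X k ω = v (c k) k} :=
  (hindep.precomp Fin.val_injective).meas_iInter fun k =>
    ⟨{v (c k) k}, measurableSet_singleton _, rfl⟩

end Cylinder

lemma mapsTo_tsum_cylinder {Ω ι : Type*} {b L : ℝ} (hb : 2 ≤ b) {X : ℕ → Ω → ℝ}
    {v : ι → ℕ → ℝ} (hv0 : ∀ j k, 0 ≤ v j k) (hvL : ∀ j k, v j k ≤ L)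
    (hXv : ∀ k ω, ∃ j, X k ω = v j k) {n : ℕ} (c : Fin n → ι) :
    MapsTo (fun ω => ∑' k, X k ω / b ^ (k + 1)) (cylinder X v c)
      (Icc (∑ k : Fin n, v (c k) k / b ^ ((k : ℕ) + 1))
        (∑ k : Fin n, v (c k) k / b ^ ((k : ℕ) + 1) + L / b ^ n)) := by
  intro ω hω
  have hhead : ∑ k ∈ Finset.range n, X k ω / b ^ (k + 1) =
      ∑ k : Fin n, v (c k) k / b ^ ((k : ℕ) + 1) := by
    rw [← Fin.sum_univ_eq_sum_range (fun k => X k ω / b ^ (k + 1))]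
    exact Finset.sum_congr rfl fun k _ => by rw [apply_eq_of_mem_cylinder hω]
  have hX0 : ∀ k, 0 ≤ X k ω := fun k => by obtain ⟨j, hj⟩ := hXv k ω; exact hj ▸ hv0 j k
  have hXL : ∀ k, X k ω ≤ L := fun k => by obtain ⟨j, hj⟩ := hXv k ω; exact hj ▸ hvL j k
  exact hhead ▸ tsum_div_pow_succ_mem_Icc hb hX0 hXL n

theorem hellingerAffinity_map_tsum_le {Ω ι : Type*} [MeasurableSpace Ω] [Fintype ι]
    {P : Measure Ω} [IsFiniteMeasure P] {b L : ℝ} (hb : 2 ≤ b) (hL : 0 ≤ L)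
    {X : ℕ → Ω → ℝ} (hX : ∀ k, Measurable (X k)) (hindep : iIndepFun X P)
    {v : ι → ℕ → ℝ} (hv : ∀ k, Injective fun j => v j k) (hv0 : ∀ j k, 0 ≤ v j k)
    (hvL : ∀ j k, v j k ≤ L) (hXv : ∀ k ω, ∃ j, X k ω = v j k)
    {p : ι → ℕ → ℝ} (hp0 : ∀ j k, 0 ≤ p j k)
    (hp : ∀ j k, P {ω | X k ω = v j k} = ENNReal.ofReal (p j k)) (n : ℕ) :
    hellingerAffinity (P.map fun ω => ∑' k, X k ω / b ^ (k + 1)) volume ≤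
      ENNReal.ofReal (√L * ∏ k ∈ Finset.range n, ∑ j, √(p j k / b)) := by
  refine (hellingerAffinity_map_le (Measurable.tsum fun k => (hX k).div_const _)
    (A := fun c : Fin n → ι => cylinder X v c) (measurableSet_cylinder hX) (pairwise_disjoint_cylinder hv) (iUnion_cylinder hXv)
    (fun _ => measurableSet_Icc) (mapsTo_tsum_cylinder hb hv0 hvL hXv)).trans_eq ?_
  have hterm : ∀ c : Fin n → ι, (P (cylinder X v c) * ENNReal.ofReal (L / b ^ n)) ^ (1 / 2 : ℝ) =
      ENNReal.ofReal (√L * ∏ k : Fin n, √(p (c k) k / b)) := by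
    intro c
    have hpb : ∀ k : Fin n, 0 ≤ p (c k) k / b := fun k => div_nonneg (hp0 _ _) (by linarith)
    have hprod : (∏ k : Fin n, p (c k) k) * (L / b ^ n) = L * ∏ k : Fin n, p (c k) k / b := by
      rw [Finset.prod_div_distrib, Finset.prod_const, Finset.card_univ, Fintype.card_fin]
      ring
    simp only [measure_cylinder hindep, hp]
    rw [← ENNReal.ofReal_prod_of_nonneg fun k _ => hp0 _ _,
      ← ENNReal.ofReal_mul (Finset.prod_nonneg fun k _ => hp0 _ _), hprod,
      ENNReal.ofReal_rpow_of_nonneg (mul_nonneg hL (Finset.prod_nonneg fun k _ => hpb k))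
        (by norm_num), ← Real.sqrt_eq_rpow, Real.sqrt_mul' _ (Finset.prod_nonneg fun k _ => hpb k),
      Real.sqrt_prod _ fun k _ => hpb k]
  simp only [Real.volume_Icc, add_sub_cancel_left, hterm]
  rw [← ENNReal.ofReal_sum_of_nonneg fun c _ => by positivity, ← Finset.mul_sum,
    ← Fintype.prod_sum (fun (k : Fin n) j => √(p j k / b)),
    Fin.prod_univ_eq_prod_range (fun k => ∑ j, √(p j k / b))]

/-- Singularity criterion: if `W = Π_n max_j p_{jn} = 0` and
`Q = Π_n Σ_j √(p_{jn}/s) = 0`, then the law of `ψ = Σ ψ_k s^{-k}` is not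
absolutely continuous with respect to Lebesgue measure. -/
theorem stmt11 {Ω : Type*} [MeasureSpace Ω] [IsProbabilityMeasure (ℙ : Measure Ω)]
    (s : ℕ) (hs : 2 ≤ s) (L : ℝ) (hL : 0 < L)
    (d : Fin s → ℕ → ℤ)
    (hmono : ∀ n : ℕ, StrictMono (fun j : Fin s => d j n))
    (hzero : ∀ n : ℕ, d ⟨0, by omega⟩ n = 0)
    (hbd : ∀ (j : Fin s) (n : ℕ), (d j n : ℝ) ≤ L)
    (p : Fin s → ℕ → ℝ) (hp0 : ∀ j k, 0 ≤ p j k)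
    (ψk : ℕ → Ω → ℝ) (hmeas : ∀ k, Measurable (ψk k))
    (hindep : iIndepFun ψk (ℙ : Measure Ω))
    (hval : ∀ (j : Fin s) (k : ℕ),
      (ℙ : Measure Ω) {ω | ψk k ω = (d j k : ℝ)} = ENNReal.ofReal (p j k))
    (hrange : ∀ (k : ℕ) (ω : Ω), ∃ j : Fin s, ψk k ω = (d j k : ℝ))
    (hQ : Filter.Tendsto
      (fun N : ℕ => ∏ n ∈ Finset.range N, ∑ j : Fin s, Real.sqrt (p j n / s))
      Filter.atTop (nhds 0))
    (ψ : Ω → ℝ) (hψ : ∀ ω, ψ ω = ∑' k : ℕ, ψk k ω / (s : ℝ) ^ (k + 1)) :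
    ¬ (Measure.map ψ (ℙ : Measure Ω) ≪ volume) := by
  intro hac
  obtain rfl : ψ = fun ω => ∑' k, ψk k ω / (s : ℝ) ^ (k + 1) := funext hψ
  have hd0 : ∀ j n, (0 : ℝ) ≤ d j n := fun j n => by
    have := (hmono n).monotone (show (⟨0, by omega⟩ : Fin s) ≤ j from Nat.zero_le _)
    exact_mod_cast hzero n ▸ this
  have hbound := hellingerAffinity_map_tsum_le (P := ℙ) (b := s) (by exact_mod_cast hs) hL.le
    hmeas hindep (fun k => Int.cast_injective.comp (hmono k).injective) hd0 hbd hrange hp0 hval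
  have hlim : Tendsto (fun n => ENNReal.ofReal (√L * ∏ k ∈ Finset.range n, ∑ j, √(p j k / s)))
      atTop (nhds 0) := by
    simpa using ENNReal.tendsto_ofReal (hQ.const_mul √L)
  have hmap : (ℙ : Measure Ω).map (fun ω => ∑' k, ψk k ω / (s : ℝ) ^ (k + 1)) = 0 :=
    eq_zero_of_hellingerAffinity_eq_zero hac (le_antisymm (ge_of_tendsto' hlim hbound) zero_le)
  rw [Measure.map_eq_zero_iff (Measurable.tsum fun k => (hmeas k).div_const _).aemeasurable]
    at hmap
  exact IsProbabilityMeasure.ne_zero _ hmap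
end

section
/- If s ≥ 2 and for each n the column (d_{0n},...,d_{(s-1)n}) is a complete residue system modulo s with |d_{jn}| ≤ L, and if Q = Π_{n=1}^∞ Σ_{j=0}^{s-1} √(p_{jn}/s) > 0, then the law of ψ = Σ_{k=1}^∞ ψ_k s^{-k} (ψ_k independent with P(ψ_k = d_{jk}) = p_{jk}) is absolutely continuous with respect to Lebesgue measure. -/
/-!
Let `μ` be the law of `ψ`. On the cylinder where the first `n` digits are given by `x`, `ψ` lies
within `L s⁻ⁿ` of `W(x) s⁻ⁿ` for an integer `W(x)` which determines `x`, since every column of `d`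
is a complete residue system mod `s`. So a ball of radius `s⁻ⁿ` meets boundedly many cylinders,
and the correlation integral `∫ μ (B(x, s⁻ⁿ)) dμ(x)` is at most a constant times the collision
probability `∑ₓ P(x)² = ∏ₖ ∑ⱼ p_{jk}²`. The estimate `s ∑ⱼ qⱼ² ≤ (∑ⱼ √(qⱼ / s))^(-8s)` for a
probability vector `q`, together with `Q > 0`, makes this `O(s⁻ⁿ)`. By Fatou's lemma `μ` then has
finite lower density with respect to Lebesgue measure at `μ`-almost every point, and such a
measure has no singular part.
-/

open MeasureTheory ProbabilityTheory Filter Metric Finset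
open scoped ENNReal Topology

section ProbabilityVector

variable {ι : Type*} [Fintype ι] {q : ι → ℝ}

lemma card_pos_of_sum_eq_one (hq1 : ∑ i, q i = 1) : 0 < Fintype.card ι := by
  have : Nonempty ι := by
    by_contra h
    simp [not_nonempty_iff.1 h] at hq1
  exact Fintype.card_pos

lemma sum_sqrt_div_card_le_one (hq0 : ∀ i, 0 ≤ q i) (hq1 : ∑ i, q i = 1) :
    ∑ i, √(q i / Fintype.card ι) ≤ 1 := by
  have hm : (0 : ℝ) < Fintype.card ι := by exact_mod_cast card_pos_of_sum_eq_one hq1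
  have hamgm : ∀ i, √(q i / Fintype.card ι) ≤ (q i + (Fintype.card ι : ℝ)⁻¹) / 2 := fun i ↦
    Real.sqrt_le_iff.2 ⟨by have := hq0 i; positivity, by
      rw [div_eq_mul_inv]; nlinarith [sq_nonneg (q i - (Fintype.card ι : ℝ)⁻¹)]⟩
  calc ∑ i, √(q i / Fintype.card ι) ≤ ∑ i, (q i + (Fintype.card ι : ℝ)⁻¹) / 2 :=
        sum_le_sum fun i _ ↦ hamgm i
    _ = 1 := by
      rw [← sum_div, sum_add_distrib, hq1, sum_const, card_univ, nsmul_eq_mul,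
        mul_inv_cancel₀ hm.ne']
      norm_num

/-- Since `q i - m⁻¹ = (√(q i) - √m⁻¹) (√(q i) + √m⁻¹)` and the second factor is at most `2`,
`∑ (q i - m⁻¹) ^ 2` is at most `4 ∑ (√(q i) - √m⁻¹) ^ 2 = 8 (1 - ∑ √(q i / m))`. -/
lemma card_mul_sum_sq_le (hq0 : ∀ i, 0 ≤ q i) (hq1 : ∑ i, q i = 1) :
    Fintype.card ι * ∑ i, q i ^ 2 ≤
      1 + 8 * Fintype.card ι * (1 - ∑ i, √(q i / Fintype.card ι)) := by
  set m : ℝ := (Fintype.card ι : ℝ)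
  have hm1 : 1 ≤ m := Nat.one_le_cast.2 (card_pos_of_sum_eq_one hq1)
  have hm : 0 < m := by linarith
  set b := √m⁻¹
  have hb2 : b ^ 2 = m⁻¹ := Real.sq_sqrt (by positivity)
  have hb1 : b ≤ 1 := Real.sqrt_le_one.2 (inv_le_one_of_one_le₀ hm1)
  have hsqrt : ∀ i, √(q i / m) = √(q i) * b := fun i ↦ by
    rw [div_eq_mul_inv, Real.sqrt_mul (hq0 i)]
  have hq2 : ∀ i, √(q i) ^ 2 = q i := fun i ↦ Real.sq_sqrt (hq0 i)
  have hqle : ∀ i, q i ≤ 1 := fun i ↦ hq1 ▸ single_le_sum (fun j _ ↦ hq0 j) (mem_univ i)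
  have hterm : ∀ i, (q i - m⁻¹) ^ 2 ≤ 4 * (√(q i) - b) ^ 2 := fun i ↦ by
    have ha1 : √(q i) ≤ 1 := Real.sqrt_le_one.2 (hqle i)
    have hfac : q i - m⁻¹ = (√(q i) - b) * (√(q i) + b) := by linear_combination -(hq2 i) + hb2
    rw [hfac, mul_pow]
    have : (√(q i) + b) ^ 2 ≤ 4 := by nlinarith [Real.sqrt_nonneg (q i), Real.sqrt_nonneg m⁻¹]
    nlinarith [sq_nonneg (√(q i) - b)]
  have hleft : ∑ i, (q i - m⁻¹) ^ 2 = ∑ i, q i ^ 2 - m⁻¹ := by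
    simp only [sub_sq, sum_add_distrib, sum_sub_distrib, ← sum_mul, ← mul_sum, hq1, sum_const,
      card_univ, nsmul_eq_mul]
    field_simp
    ring
  have hright : ∑ i, (√(q i) - b) ^ 2 = 2 - 2 * ∑ i, √(q i / m) := by
    simp only [sub_sq, hq2, hb2, hsqrt, sum_add_distrib, sum_sub_distrib, hq1, sum_const,
      card_univ, nsmul_eq_mul, ← sum_mul, ← mul_sum]
    field_simp
    ring
  have hsum := sum_le_sum fun i (_ : i ∈ univ) ↦ hterm i
  rw [hleft, ← mul_sum, hright] at hsum
  have := mul_le_mul_of_nonneg_left hsum hm.le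
  rw [mul_sub, mul_inv_cancel₀ hm.ne'] at this
  linarith

lemma mul_pow_le_one_of_le_one_add {σ x : ℝ} (m : ℕ) (hσ : 0 ≤ σ) (hx : x ≤ 1 + m * (1 - σ)) :
    x * σ ^ m ≤ 1 := by
  have hexp : 1 + m * (1 - σ) ≤ Real.exp (1 - σ) ^ m := by
    rw [← Real.exp_nat_mul]; linarith [Real.add_one_le_exp (m * (1 - σ))]
  have hσexp : σ * Real.exp (1 - σ) ≤ 1 := by
    calc σ * Real.exp (1 - σ) ≤ Real.exp (σ - 1) * Real.exp (1 - σ) := by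
          gcongr; linarith [Real.add_one_le_exp (σ - 1)]
      _ = 1 := by rw [← Real.exp_add]; simp
  calc x * σ ^ m ≤ Real.exp (1 - σ) ^ m * σ ^ m := by gcongr; linarith
    _ = (σ * Real.exp (1 - σ)) ^ m := by ring
    _ ≤ 1 := pow_le_one₀ (by positivity) hσexp

lemma card_mul_sum_sq_mul_pow_le_one (hq0 : ∀ i, 0 ≤ q i) (hq1 : ∑ i, q i = 1) :
    (Fintype.card ι * ∑ i, q i ^ 2) * (∑ i, √(q i / Fintype.card ι)) ^ (8 * Fintype.card ι) ≤ 1 :=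
  mul_pow_le_one_of_le_one_add _ (sum_nonneg fun _ _ ↦ Real.sqrt_nonneg _)
    (by push_cast; linarith [card_mul_sum_sq_le hq0 hq1])

lemma prod_sum_sq_le_of_le_prod_sum_sqrt {κ : Type*} [Fintype κ] {w : κ → ι → ℝ}
    (hw0 : ∀ k i, 0 ≤ w k i) (hw1 : ∀ k, ∑ i, w k i = 1) {c : ℝ} (hc : 0 < c)
    (hσ : c ≤ ∏ k, ∑ i, √(w k i / Fintype.card ι)) :
    ∏ k, ∑ i, w k i ^ 2 ≤
      (c ^ (8 * Fintype.card ι))⁻¹ * ((Fintype.card ι : ℝ)⁻¹) ^ Fintype.card κ := by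
  rcases isEmpty_or_nonempty κ with hκ | ⟨⟨k₀⟩⟩
  · simp only [univ_eq_empty, prod_empty, Fintype.card_of_isEmpty, pow_zero, mul_one] at hσ ⊢
    exact (one_le_inv₀ (by positivity)).2 (pow_le_one₀ hc.le hσ)
  set m : ℝ := (Fintype.card ι : ℝ)
  have hm : 0 < m := Nat.cast_pos.2 (card_pos_of_sum_eq_one (hw1 k₀))
  have hprod : (∏ k, m * ∑ i, w k i ^ 2) * (∏ k, ∑ i, √(w k i / m)) ^ (8 * Fintype.card ι) ≤ 1 := by
    rw [← prod_pow, ← prod_mul_distrib]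
    exact prod_le_one (fun k _ ↦ by positivity) fun k _ ↦
      card_mul_sum_sq_mul_pow_le_one (hw0 k) (hw1 k)
  rw [prod_mul_distrib, prod_const, card_univ] at hprod
  have hc' : c ^ (8 * Fintype.card ι) ≤ (∏ k, ∑ i, √(w k i / m)) ^ (8 * Fintype.card ι) :=
    pow_le_pow_left₀ hc.le hσ _
  have : m ^ Fintype.card κ * (∏ k, ∑ i, w k i ^ 2) * c ^ (8 * Fintype.card ι) ≤ 1 :=
    (mul_le_mul_of_nonneg_left hc' (by positivity)).trans hprod
  rw [inv_pow, ← mul_inv, ← one_div, le_div_iff₀ (by positivity)]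
  linarith

end ProbabilityVector

lemma le_prod_range_succ_of_tendsto {a : ℕ → ℝ} (h0 : ∀ k, 0 ≤ a k) (h1 : ∀ k, a k ≤ 1) {c : ℝ}
    (h : Tendsto (fun N ↦ ∏ k ∈ range N, a k) atTop (𝓝 c)) (n : ℕ) :
    c ≤ ∏ k ∈ range n, a (k + 1) := by
  have hanti : Antitone fun N ↦ ∏ k ∈ range N, a k := antitone_nat_of_succ_le fun N ↦ by
    rw [prod_range_succ]
    exact mul_le_of_le_one_right (prod_nonneg fun k _ ↦ h0 k) (h1 N)
  calc c ≤ ∏ k ∈ range (n + 1), a k := hanti.le_of_tendsto h _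
    _ = (∏ k ∈ range n, a (k + 1)) * a 0 := prod_range_succ' _ _
    _ ≤ ∏ k ∈ range n, a (k + 1) := mul_le_of_le_one_right (prod_nonneg fun k _ ↦ h0 _) (h1 0)

section Digits

variable {s : ℕ} (d : Fin s → ℕ → ℤ)

/-- The integer `∑_{k < n} d (x k) (k + 1) * s ^ (n - 1 - k)`, written in Horner form. -/
def digitInt : (n : ℕ) → (Fin n → Fin s) → ℤ
  | 0, _ => 0
  | n + 1, x => s * digitInt n (Fin.init x) + d (x (Fin.last n)) (n + 1)

variable {d}

/-- Reducing modulo `s` recovers the last digit. -/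
lemma digitInt_injective (hres : ∀ n, Function.Injective fun j : Fin s ↦ (d j n : ZMod s))
    (n : ℕ) : Function.Injective (digitInt d n) := by
  induction n with
  | zero => exact Function.injective_of_subsingleton _
  | succ n ih =>
    intro x y hxy
    simp only [digitInt] at hxy
    have hlast : x (Fin.last n) = y (Fin.last n) := hres (n + 1) <| by
      simpa using congrArg (fun z : ℤ ↦ (z : ZMod s)) hxy
    have hs : (s : ℤ) ≠ 0 := by
      have := (x 0).pos; omega
    have hinit : Fin.init x = Fin.init y :=
      ih (mul_left_cancel₀ hs (by rw [hlast] at hxy; omega))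
    rw [← Fin.snoc_init_self x, ← Fin.snoc_init_self y, hinit, hlast]

lemma digitInt_div_pow (hs : s ≠ 0) (n : ℕ) (x : Fin n → Fin s) :
    (digitInt d n x : ℝ) / (s : ℝ) ^ n =
      ∑ k : Fin n, (d (x k) (k + 1) : ℝ) / (s : ℝ) ^ (k + 1 : ℕ) := by
  induction n with
  | zero => simp [digitInt]
  | succ n ih =>
    have ih' := ih (Fin.init x)
    simp only [Fin.init] at ih'
    rw [Fin.sum_univ_castSucc]
    simp only [Fin.val_castSucc, Fin.val_last]
    rw [← ih']
    simp only [digitInt]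
    push_cast
    field_simp
    ring

end Digits

lemma card_filter_abs_sub_le_of_injective {α : Type*} [Fintype α] {f : α → ℤ}
    (hf : Function.Injective f) (a C : ℝ) :
    #{i | |(f i : ℝ) - a| ≤ C} ≤ ⌊2 * C⌋₊ + 1 := by
  classical
  have hmaps : ∀ i ∈ ({i | |(f i : ℝ) - a| ≤ C} : Finset α), f i ∈ Icc ⌈a - C⌉ ⌊a + C⌋ := by
    intro i hi
    rw [mem_filter] at hi
    rw [mem_Icc, Int.ceil_le, Int.le_floor]
    constructor <;> linarith [(abs_le.1 hi.2).1, (abs_le.1 hi.2).2]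
  have hwidth : ⌊a + C⌋ - ⌈a - C⌉ ≤ ⌊2 * C⌋ := by
    rw [Int.le_floor]
    push_cast
    linarith [Int.floor_le (a + C), Int.le_ceil (a - C)]
  calc #{i | |(f i : ℝ) - a| ≤ C} ≤ #(Icc ⌈a - C⌉ ⌊a + C⌋) :=
        card_le_card_of_injOn f hmaps hf.injOn
    _ ≤ ⌊2 * C⌋₊ + 1 := by
      rw [Int.card_Icc, Int.toNat_le, ← Int.floor_toNat]
      push_cast
      linarith [Int.self_le_toNat ⌊2 * C⌋]

section Series

variable {s L : ℝ} {a : ℕ → ℝ}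

lemma hasSum_div_pow_succ (hs : 1 < s) (L : ℝ) :
    HasSum (fun k : ℕ ↦ L / s ^ (k + 1)) (L / (s - 1)) := by
  have hs0 : s ≠ 0 := by positivity
  have hs1 : s - 1 ≠ 0 := by linarith
  have hfun : (fun k : ℕ ↦ L / s ^ (k + 1)) = fun k ↦ L / s * s⁻¹ ^ k := by
    funext k; rw [pow_succ, inv_pow]; field_simp
  have hval : L / (s - 1) = L / s * (1 - s⁻¹)⁻¹ := by field_simp
  rw [hfun, hval]
  exact (hasSum_geometric_of_lt_one (by positivity) (inv_lt_one_of_one_lt₀ hs)).mul_left _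

lemma norm_div_pow_succ_le (hs : 1 < s) (ha : ∀ k, |a k| ≤ L) (k : ℕ) :
    ‖a k / s ^ (k + 1)‖ ≤ L / s ^ (k + 1) := by
  have : 0 < s ^ (k + 1) := pow_pos (by linarith) _
  rw [Real.norm_eq_abs, abs_div, abs_of_pos this]
  exact div_le_div_of_nonneg_right (ha k) this.le

lemma summable_div_pow_succ_s19 (hs : 1 < s) (ha : ∀ k, |a k| ≤ L) :
    Summable fun k ↦ a k / s ^ (k + 1) :=
  (hasSum_div_pow_succ hs L).summable.of_norm_bounded (norm_div_pow_succ_le hs ha)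

lemma abs_tsum_div_pow_succ_le (hs : 1 < s) (ha : ∀ k, |a k| ≤ L) :
    |∑' k, a k / s ^ (k + 1)| ≤ L / (s - 1) := by
  rw [← Real.norm_eq_abs]
  exact tsum_of_norm_bounded (hasSum_div_pow_succ hs L) (norm_div_pow_succ_le hs ha)

lemma abs_tsum_div_pow_succ_sub_sum_le (hs : 2 ≤ s) (ha : ∀ k, |a k| ≤ L) (n : ℕ) :
    |∑' k, a k / s ^ (k + 1) - ∑ k ∈ range n, a k / s ^ (k + 1)| ≤ L / s ^ n := by
  have hs1 : 1 < s := by linarith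
  have hsn : 0 < s ^ n := pow_pos (by linarith) n
  rw [← (summable_div_pow_succ_s19 hs1 ha).sum_add_tsum_nat_add n, add_sub_cancel_left]
  have htail : ∑' k, a (k + n) / s ^ (k + n + 1) = (∑' k, a (k + n) / s ^ (k + 1)) / s ^ n := by
    rw [← tsum_div_const]
    congr 1; ext k
    rw [div_div, ← pow_add]; ring_nf
  rw [htail, abs_div, abs_of_pos hsn]
  refine div_le_div_of_nonneg_right ?_ hsn.le
  calc |∑' k, a (k + n) / s ^ (k + 1)| ≤ L / (s - 1) := abs_tsum_div_pow_succ_le hs1 fun k ↦ ha _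
    _ ≤ L := div_le_self ((abs_nonneg _).trans (ha 0)) (by linarith)

lemma measurable_tsum_div_pow_succ {Ω : Type*} [MeasurableSpace Ω] (hs : 1 < s)
    {f : ℕ → Ω → ℝ} (hf : ∀ k, Measurable (f k)) (hbd : ∀ k ω, |f k ω| ≤ L) :
    Measurable fun ω ↦ ∑' k, f k ω / s ^ (k + 1) :=
  measurable_of_tendsto_metrizable
    (fun _ ↦ Finset.measurable_sum _ fun k _ ↦ (hf k).div_const _)
    (tendsto_pi_nhds.2 fun ω ↦ (summable_div_pow_succ_s19 hs (hbd · ω)).hasSum.tendsto_sum_nat)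

end Series

lemma measurable_measure_closedBall {α : Type*} [PseudoMetricSpace α] [MeasurableSpace α]
    [OpensMeasurableSpace α] [SecondCountableTopology α] (μ : Measure α) [SFinite μ] (r : ℝ) :
    Measurable fun x ↦ μ (closedBall x r) :=
  measurable_measure_prodMk_left
    (measurableSet_le (measurable_snd.dist measurable_fst) measurable_const : MeasurableSet
      {q : α × α | dist q.2 q.1 ≤ r})

/-- At `ν`-almost every point the singular part `ν` of `μ` has infinite density with respect to
Lebesgue measure, which the hypothesis excludes. -/
theorem absolutelyContinuous_of_ae_liminf_lt_top (μ : Measure ℝ) [IsLocallyFiniteMeasure μ]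
    {r : ℕ → ℝ} (hr : Tendsto r atTop (𝓝[>] 0))
    (h : ∀ᵐ x ∂μ, liminf (fun n ↦ μ (closedBall x (r n)) / volume (closedBall x (r n))) atTop < ∞) :
    μ ≪ volume := by
  suffices hν : μ.singularPart volume = 0 by
    rw [μ.haveLebesgueDecomposition_add volume, hν, zero_add]
    exact withDensity_absolutelyContinuous _ _
  set ν := μ.singularPart volume
  have hνμ : ν ≤ μ := Measure.singularPart_le μ volume
  have hr_pos : ∀ᶠ n in atTop, 0 < r n := (tendsto_nhdsWithin_iff.1 hr).2
  have hfalse : ∀ᵐ x ∂ν, False := by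
    filter_upwards [(Besicovitch.vitaliFamily ν).ae_eventually_measure_zero_of_singular
        (Measure.mutuallySingular_singularPart μ volume).symm,
      (Measure.absolutelyContinuous_of_le hνμ).ae_le h] with x hx hlim
    have hvol : Tendsto (fun n ↦ volume (closedBall x (r n)) / ν (closedBall x (r n))) atTop
        (𝓝 0) := hx.comp ((Besicovitch.tendsto_filterAt ν x).comp hr)
    have hν_top : Tendsto (fun n ↦ ν (closedBall x (r n)) / volume (closedBall x (r n))) atTop
        (𝓝 ∞) := by
      rw [← ENNReal.inv_zero]
      refine (tendsto_inv_iff.2 hvol).congr' ?_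
      filter_upwards [hr_pos] with n hn
      exact ENNReal.inv_div (Or.inr measure_closedBall_lt_top.ne)
        (Or.inr (measure_closedBall_pos volume x hn).ne')
    have hμ_top := tendsto_nhds_top_mono hν_top (Eventually.of_forall fun n ↦
      ENNReal.div_le_div_right (Measure.le_iff'.1 hνμ _) _)
    exact hlim.ne hμ_top.liminf_eq
  exact Measure.measure_univ_eq_zero.1 (by simpa [ae_iff] using hfalse)

/-- By Fatou's lemma the lower density of `μ` is finite `μ`-almost everywhere. -/
theorem absolutelyContinuous_of_lintegral_measure_closedBall_le (μ : Measure ℝ)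
    [IsLocallyFiniteMeasure μ] {r : ℕ → ℝ} (hr : Tendsto r atTop (𝓝[>] 0)) {K : ℝ≥0∞} (hK : K ≠ ∞)
    (h : ∀ n, ∫⁻ x, μ (closedBall x (r n)) ∂μ ≤ K * ENNReal.ofReal (r n)) : μ ≪ volume := by
  set F : ℕ → ℝ → ℝ≥0∞ := fun n x ↦ μ (closedBall x (r n)) * (ENNReal.ofReal (r n))⁻¹
  have hF : ∀ n, Measurable (F n) := fun n ↦ (measurable_measure_closedBall μ _).mul_const _
  have hFint : ∀ n, ∫⁻ x, F n x ∂μ ≤ K := fun n ↦ by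
    rw [lintegral_mul_const _ (measurable_measure_closedBall μ _), ← div_eq_mul_inv]
    exact ENNReal.div_le_of_le_mul (h n)
  have hliminf : ∀ᵐ x ∂μ, liminf (fun n ↦ F n x) atTop < ∞ := by
    refine ae_lt_top (Measurable.liminf hF) (ne_top_of_le_ne_top hK ?_)
    calc ∫⁻ x, liminf (fun n ↦ F n x) atTop ∂μ ≤ liminf (fun n ↦ ∫⁻ x, F n x ∂μ) atTop :=
          lintegral_liminf_le hF
      _ ≤ liminf (fun _ ↦ K) atTop := liminf_le_liminf (Eventually.of_forall hFint)
      _ = K := liminf_const K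
  refine absolutelyContinuous_of_ae_liminf_lt_top μ hr ?_
  filter_upwards [hliminf] with x hx
  refine lt_of_le_of_lt (liminf_le_liminf ?_) hx
  filter_upwards [(tendsto_nhdsWithin_iff.1 hr).2] with n hn
  rw [Real.volume_closedBall, div_eq_mul_inv]
  exact mul_le_mul_right (ENNReal.inv_le_inv.2 (ENNReal.ofReal_le_ofReal (by linarith [hn.out]))) _

lemma sum_sum_filter_mul_le {ι : Type*} [Fintype ι] (a : ι → ℝ≥0∞) {R : ι → ι → Prop}
    [DecidableRel R] (hR : ∀ i j, R i j → R j i) {M : ℕ} (hM : ∀ i, #{j | R i j} ≤ M) :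
    ∑ i, ∑ j with R i j, a i * a j ≤ 2 * M * ∑ i, a i ^ 2 := by
  have hab : ∀ i j, a i * a j ≤ a i ^ 2 + a j ^ 2 := fun i j ↦ by
    rcases le_total (a i) (a j) with h | h
    · exact (mul_le_mul_left h _).trans (sq (a j) ▸ le_add_self)
    · exact (mul_le_mul_right h _).trans (sq (a i) ▸ le_self_add)
  have hswap : ∑ i, ∑ j with R i j, a j ^ 2 = ∑ j, ∑ i with R j i, a j ^ 2 := by
    simp only [sum_filter]
    rw [sum_comm]
    exact sum_congr rfl fun j _ ↦ sum_congr rfl fun i _ ↦ if_congr ⟨hR i j, hR j i⟩ rfl rfl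
  calc ∑ i, ∑ j with R i j, a i * a j ≤ ∑ i, ∑ j with R i j, (a i ^ 2 + a j ^ 2) :=
        sum_le_sum fun i _ ↦ sum_le_sum fun j _ ↦ hab i j
    _ = ∑ i, ∑ j with R i j, a i ^ 2 + ∑ i, ∑ j with R i j, a j ^ 2 := by
      simp only [sum_add_distrib]
    _ = ∑ i, #{j | R i j} * a i ^ 2 + ∑ j, #{i | R j i} * a j ^ 2 := by
      rw [hswap]; simp only [sum_const, nsmul_eq_mul]
    _ ≤ ∑ i, M * a i ^ 2 + ∑ j, M * a j ^ 2 := by gcongr <;> exact_mod_cast hM _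
    _ = 2 * M * ∑ i, a i ^ 2 := by rw [← mul_sum]; ring

lemma lintegral_le_sum_mul_measure_of_forall_mem_le {Ω ι : Type*} [MeasurableSpace Ω]
    (P : Measure Ω) [Fintype ι] {A : ι → Set Ω} (hA : ∀ i, MeasurableSet (A i))
    (hcover : ∀ ω, ∃ i, ω ∈ A i) {F : Ω → ℝ≥0∞} {g : ι → ℝ≥0∞}
    (hFg : ∀ i, ∀ ω ∈ A i, F ω ≤ g i) :
    ∫⁻ ω, F ω ∂P ≤ ∑ i, g i * P (A i) := by
  calc ∫⁻ ω, F ω ∂P ≤ ∫⁻ ω, ∑ i, (A i).indicator (fun _ ↦ g i) ω ∂P := lintegral_mono fun ω ↦ by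
        obtain ⟨i, hi⟩ := hcover ω
        refine (hFg i ω hi).trans ?_
        simpa [hi] using single_le_sum (f := fun i ↦ (A i).indicator (fun _ ↦ g i) ω)
          (fun _ _ ↦ zero_le) (mem_univ i)
    _ = ∑ i, g i * P (A i) := by
      rw [lintegral_finsetSum _ fun i _ ↦ measurable_const.indicator (hA i)]
      simp only [lintegral_indicator_const (hA _)]

lemma lintegral_map_measure_closedBall_le {Ω ι : Type*} [MeasurableSpace Ω] (P : Measure Ω)
    [SFinite P] [Fintype ι] {ψ : Ω → ℝ} (hψ : Measurable ψ) {A : ι → Set Ω}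
    (hA : ∀ i, MeasurableSet (A i)) (hcover : ∀ ω, ∃ i, ω ∈ A i) {v : ι → ℝ} {δ : ℝ}
    (hv : ∀ i, ∀ ω ∈ A i, |ψ ω - v i| ≤ δ) (r : ℝ) {M : ℕ}
    (hM : ∀ i, #{j | |v j - v i| ≤ r + 2 * δ} ≤ M) :
    ∫⁻ x, P.map ψ (closedBall x r) ∂P.map ψ ≤ 2 * M * ∑ i, P (A i) ^ 2 := by
  rw [lintegral_map (measurable_measure_closedBall _ r) hψ]
  have hball : ∀ i, ∀ ω ∈ A i,
      P.map ψ (closedBall (ψ ω) r) ≤ ∑ j with |v j - v i| ≤ r + 2 * δ, P (A j) := by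
    intro i ω hω
    rw [Measure.map_apply hψ measurableSet_closedBall]
    refine (measure_mono fun ω' hω' ↦ ?_).trans (measure_biUnion_finset_le _ A)
    obtain ⟨j, hj⟩ := hcover ω'
    refine Set.mem_biUnion (mem_filter.2 ⟨mem_univ j, ?_⟩) hj
    have hω' : |ψ ω' - ψ ω| ≤ r := hω'
    have hj' := hv j ω' hj
    have hi' := hv i ω hω
    rw [abs_le] at *
    constructor <;> linarith
  refine (lintegral_le_sum_mul_measure_of_forall_mem_le P hA hcover hball).trans ?_
  calc ∑ i, (∑ j with |v j - v i| ≤ r + 2 * δ, P (A j)) * P (A i)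
      = ∑ i, ∑ j with |v j - v i| ≤ r + 2 * δ, P (A i) * P (A j) :=
        sum_congr rfl fun i _ ↦ by rw [sum_mul]; exact sum_congr rfl fun j _ ↦ mul_comm _ _
    _ ≤ 2 * M * ∑ i, P (A i) ^ 2 :=
        sum_sum_filter_mul_le _ (fun i j h ↦ by rwa [abs_sub_comm]) hM

section DigitModel

variable {Ω : Type*} {ψk : ℕ → Ω → ℝ} {s : ℕ} {d : Fin s → ℕ → ℤ}

variable (ψk d) in
def digitCylinder (n : ℕ) (x : Fin n → Fin s) : Set Ω :=
  ⋂ k : Fin n, ψk k ⁻¹' {(d (x k) (k + 1) : ℝ)}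

lemma mem_digitCylinder {n : ℕ} {x : Fin n → Fin s} {ω : Ω} :
    ω ∈ digitCylinder ψk d n x ↔ ∀ k : Fin n, ψk k ω = d (x k) (k + 1) := by
  simp [digitCylinder]

lemma exists_mem_digitCylinder (hrange : ∀ k ω, ∃ j : Fin s, ψk k ω = d j (k + 1)) (n : ℕ)
    (ω : Ω) : ∃ x, ω ∈ digitCylinder ψk d n x := by
  choose x hx using fun k : Fin n ↦ hrange k ω
  exact ⟨x, mem_digitCylinder.2 hx⟩

lemma sum_range_div_pow_eq_of_mem_digitCylinder (hs : s ≠ 0) {n : ℕ} {x : Fin n → Fin s}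
    {ω : Ω} (hω : ω ∈ digitCylinder ψk d n x) :
    ∑ k ∈ range n, ψk k ω / (s : ℝ) ^ (k + 1) = digitInt d n x / (s : ℝ) ^ n := by
  rw [digitInt_div_pow hs, ← Fin.sum_univ_eq_sum_range]
  exact sum_congr rfl fun k _ ↦ by rw [mem_digitCylinder.1 hω k]

lemma abs_sub_digitInt_div_pow_le (hs : 2 ≤ s) {L : ℝ} (hbd : ∀ k ω, |ψk k ω| ≤ L) {ψ : Ω → ℝ}
    (hψ : ∀ ω, ψ ω = ∑' k, ψk k ω / (s : ℝ) ^ (k + 1)) {n : ℕ} {x : Fin n → Fin s} {ω : Ω}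
    (hω : ω ∈ digitCylinder ψk d n x) :
    |ψ ω - digitInt d n x / (s : ℝ) ^ n| ≤ L / (s : ℝ) ^ n := by
  rw [hψ, ← sum_range_div_pow_eq_of_mem_digitCylinder (by omega) hω]
  exact abs_tsum_div_pow_succ_sub_sum_le (by exact_mod_cast hs) (fun k ↦ hbd k ω) n

lemma card_abs_digitInt_div_pow_sub_le (hs : s ≠ 0)
    (hres : ∀ n, Function.Injective fun j : Fin s ↦ (d j n : ZMod s)) (n : ℕ)
    (x : Fin n → Fin s) (ρ : ℝ) :
    #{y | |(digitInt d n y : ℝ) / s ^ n - digitInt d n x / s ^ n| ≤ ρ / s ^ n} ≤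
      ⌊2 * ρ⌋₊ + 1 := by
  have hsn : (0 : ℝ) < (s : ℝ) ^ n := by positivity
  simp_rw [← sub_div, abs_div, abs_of_pos hsn, div_le_div_iff_of_pos_right hsn]
  exact card_filter_abs_sub_le_of_injective (digitInt_injective hres n) _ ρ

variable [MeasurableSpace Ω]

lemma measurableSet_digitCylinder (hmeas : ∀ k, Measurable (ψk k)) (n : ℕ) (x : Fin n → Fin s) :
    MeasurableSet (digitCylinder ψk d n x) :=
  MeasurableSet.iInter fun k ↦ hmeas k (measurableSet_singleton _)

variable {P : Measure Ω} {p : Fin s → ℕ → ℝ}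

lemma measure_digitCylinder (hindep : iIndepFun ψk P)
    (hval : ∀ j k, P {ω | ψk k ω = d j (k + 1)} = ENNReal.ofReal (p j (k + 1))) (n : ℕ)
    (x : Fin n → Fin s) :
    P (digitCylinder ψk d n x) = ∏ k : Fin n, ENNReal.ofReal (p (x k) (k + 1)) := by
  rw [digitCylinder, (hindep.precomp Fin.val_injective).meas_iInter fun k ↦
    ⟨_, measurableSet_singleton _, rfl⟩]
  exact prod_congr rfl fun k _ ↦ hval (x k) k

lemma sum_measure_digitCylinder_sq (hindep : iIndepFun ψk P)
    (hval : ∀ j k, P {ω | ψk k ω = d j (k + 1)} = ENNReal.ofReal (p j (k + 1)))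
    (hp0 : ∀ j k, 0 ≤ p j k) (n : ℕ) :
    ∑ x : Fin n → Fin s, P (digitCylinder ψk d n x) ^ 2 =
      ENNReal.ofReal (∏ k : Fin n, ∑ j, p j (k + 1) ^ 2) := by
  simp only [measure_digitCylinder hindep hval, ← prod_pow]
  rw [← Fintype.prod_sum (fun (k : Fin n) j ↦ ENNReal.ofReal (p j (k + 1)) ^ 2),
    ENNReal.ofReal_prod_of_nonneg fun _ _ ↦ by positivity]
  refine prod_congr rfl fun k _ ↦ ?_
  rw [ENNReal.ofReal_sum_of_nonneg fun _ _ ↦ by positivity]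
  exact sum_congr rfl fun j _ ↦ by rw [ENNReal.ofReal_pow (hp0 _ _)]

lemma sum_measure_digitCylinder_sq_le (hindep : iIndepFun ψk P)
    (hval : ∀ j k, P {ω | ψk k ω = d j (k + 1)} = ENNReal.ofReal (p j (k + 1)))
    (hp0 : ∀ j k, 0 ≤ p j k) (hp1 : ∀ k, ∑ j, p j k = 1) {c : ℝ} (hc : 0 < c)
    (hQ : Tendsto (fun N ↦ ∏ n ∈ range N, ∑ j, √(p j n / s)) atTop (𝓝 c)) (n : ℕ) :
    ∑ x : Fin n → Fin s, P (digitCylinder ψk d n x) ^ 2 ≤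
      ENNReal.ofReal (c ^ (8 * s))⁻¹ * ENNReal.ofReal ((s : ℝ)⁻¹ ^ n) := by
  have hσ : c ≤ ∏ k : Fin n, ∑ j, √(p j (k + 1) / Fintype.card (Fin s)) := by
    simp only [Fintype.card_fin, Fin.prod_univ_eq_prod_range (fun k ↦ ∑ j, √(p j (k + 1) / s))]
    refine le_prod_range_succ_of_tendsto (fun _ ↦ by positivity) (fun k ↦ ?_) hQ n
    simpa only [Fintype.card_fin] using sum_sqrt_div_card_le_one (hp0 · k) (hp1 k)
  rw [sum_measure_digitCylinder_sq hindep hval hp0, ← ENNReal.ofReal_mul (by positivity)]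
  gcongr
  simpa using prod_sum_sq_le_of_le_prod_sum_sqrt (w := fun (k : Fin n) j ↦ p j (k + 1))
    (fun _ _ ↦ hp0 _ _) (fun _ ↦ hp1 _) hc hσ

end DigitModel

theorem stmt19_general {Ω : Type*} [MeasureSpace Ω] [IsProbabilityMeasure (ℙ : Measure Ω)]
    (s : ℕ) (hs : 2 ≤ s) (L : ℝ)
    (d : Fin s → ℕ → ℤ)
    (hres : ∀ n : ℕ, Function.Bijective (fun j : Fin s => (d j n : ZMod s)))
    (hbd : ∀ (j : Fin s) (n : ℕ), |(d j n : ℝ)| ≤ L)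
    (p : Fin s → ℕ → ℝ) (hp0 : ∀ j k, 0 ≤ p j k) (hp1 : ∀ k, ∑ j : Fin s, p j k = 1)
    (ψk : ℕ → Ω → ℝ) (hmeas : ∀ k, Measurable (ψk k))
    (hindep : iIndepFun ψk (ℙ : Measure Ω))
    (hval : ∀ (j : Fin s) (k : ℕ),
      (ℙ : Measure Ω) {ω | ψk k ω = (d j (k + 1) : ℝ)} = ENNReal.ofReal (p j (k + 1)))
    (hrange : ∀ (k : ℕ) (ω : Ω), ∃ j : Fin s, ψk k ω = (d j (k + 1) : ℝ))
    (c : ℝ) (hc : 0 < c)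
    (hQ : Filter.Tendsto
      (fun N : ℕ => ∏ n ∈ Finset.range N, ∑ j : Fin s, Real.sqrt (p j n / s))
      Filter.atTop (nhds c))
    (ψ : Ω → ℝ) (hψ : ∀ ω, ψ ω = ∑' k : ℕ, ψk k ω / (s : ℝ) ^ (k + 1)) :
    Measure.map ψ (ℙ : Measure Ω) ≪ volume := by
  have hs0 : s ≠ 0 := by omega
  have hs1 : (1 : ℝ) < s := by exact_mod_cast hs
  have hψk : ∀ k ω, |ψk k ω| ≤ L := fun k ω ↦ by
    obtain ⟨j, hj⟩ := hrange k ω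
    exact hj ▸ hbd j _
  have hψ_meas : Measurable ψ := funext hψ ▸ measurable_tsum_div_pow_succ hs1 hmeas hψk
  set M := ⌊2 * (1 + 2 * L)⌋₊ + 1
  refine absolutelyContinuous_of_lintegral_measure_closedBall_le _
    (tendsto_pow_atTop_nhdsWithin_zero_of_lt_one (by positivity) (inv_lt_one_of_one_lt₀ hs1))
    (K := 2 * M * ENNReal.ofReal (c ^ (8 * s))⁻¹) (by finiteness) fun n ↦ ?_
  have hM (x : Fin n → Fin s) : #{y | |(digitInt d n y : ℝ) / s ^ n - digitInt d n x / s ^ n| ≤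
      (s : ℝ)⁻¹ ^ n + 2 * (L / s ^ n)} ≤ M := by
    rw [inv_pow, ← one_div, ← mul_div_assoc, ← add_div]
    exact card_abs_digitInt_div_pow_sub_le hs0 (fun n ↦ (hres n).injective) n x _
  calc ∫⁻ x, Measure.map ψ ℙ (closedBall x ((s : ℝ)⁻¹ ^ n)) ∂Measure.map ψ ℙ
      ≤ 2 * M * ∑ x, ℙ (digitCylinder ψk d n x) ^ 2 :=
        lintegral_map_measure_closedBall_le ℙ hψ_meas (measurableSet_digitCylinder hmeas n)
          (exists_mem_digitCylinder hrange n)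
          (fun x ω hω ↦ abs_sub_digitInt_div_pow_le hs hψk hψ hω) _ hM
    _ ≤ 2 * M * ENNReal.ofReal (c ^ (8 * s))⁻¹ * ENNReal.ofReal ((s : ℝ)⁻¹ ^ n) := by
      rw [mul_assoc _ (ENNReal.ofReal _)]
      gcongr
      exact sum_measure_digitCylinder_sq_le hindep hval hp0 hp1 hc hQ n

/-- Absolute continuity criterion: if each column of `d` is a complete residue
system mod `s` with entries bounded by `L`, and `Q = Π_n Σ_j √(p_{jn}/s) > 0`,
then the law of `ψ = Σ ψ_k s^{-k}` is absolutely continuous. -/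
theorem stmt19 {Ω : Type*} [MeasureSpace Ω] [IsProbabilityMeasure (ℙ : Measure Ω)]
    (s : ℕ) (hs : 2 ≤ s) (L : ℝ) (hL : 0 < L)
    (d : Fin s → ℕ → ℤ)
    (hres : ∀ n : ℕ, Function.Bijective (fun j : Fin s => (d j n : ZMod s)))
    (hbd : ∀ (j : Fin s) (n : ℕ), |(d j n : ℝ)| ≤ L)
    (p : Fin s → ℕ → ℝ) (hp0 : ∀ j k, 0 ≤ p j k) (hp1 : ∀ k, ∑ j : Fin s, p j k = 1)
    (ψk : ℕ → Ω → ℝ) (hmeas : ∀ k, Measurable (ψk k))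
    (hindep : iIndepFun ψk (ℙ : Measure Ω))
    (hval : ∀ (j : Fin s) (k : ℕ),
      (ℙ : Measure Ω) {ω | ψk k ω = (d j (k + 1) : ℝ)} = ENNReal.ofReal (p j (k + 1)))
    (hrange : ∀ (k : ℕ) (ω : Ω), ∃ j : Fin s, ψk k ω = (d j (k + 1) : ℝ))
    (c : ℝ) (hc : 0 < c)
    (hQ : Filter.Tendsto
      (fun N : ℕ => ∏ n ∈ Finset.range N, ∑ j : Fin s, Real.sqrt (p j n / s))
      Filter.atTop (nhds c))
    (ψ : Ω → ℝ) (hψ : ∀ ω, ψ ω = ∑' k : ℕ, ψk k ω / (s : ℝ) ^ (k + 1)) :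
    Measure.map ψ (ℙ : Measure Ω) ≪ volume :=
  stmt19_general s hs L d hres hbd p hp0 hp1 ψk hmeas hindep hval hrange c hc hQ ψ hψ
end
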